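/- Let p > 3 be prime and m, r positive integers. Then S_2(mp^r) = Σ_{1 ≤ i ≤ mp^r, p ∤ i} 1/i^2 has p-adic valuation at least r. -/

import Mathlib

/-!
Each `i` prime to `p` is a unit of `ℤ_[p]`, so the sum is the image of `z = ∑ i⁻²` in `ℚ_[p]`,
and it suffices that `z` reduces to `0` in `ZMod (p ^ r)`. Since `i⁻¹ mod p ^ r` only depends on
`i mod p ^ r`, that reduction is `m` times `∑ u⁻² = ∑ u²` over the units `u` of `ZMod (p ^ r)`.
Replacing `u` by `2u` shows `3 ∑ u² = 0`, and `3` is a unit because `p > 3`.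
-/

open Finset

theorem IsUnit.map_ringInverse {M N F : Type*} [MonoidWithZero M] [MonoidWithZero N]
    [FunLike F M N] [MonoidHomClass F M N] (f : F) {x : M} (hx : IsUnit x) :
    f (Ring.inverse x) = Ring.inverse (f x) := by
  rw [← Ring.inverse_mul_cancel_left (f x) (f (Ring.inverse x)) (hx.map f), ← map_mul,
    Ring.mul_inverse_cancel x hx, map_one, mul_one]

theorem sum_ringInverse_pow_eq_sum_units {R : Type*} [Semiring R] [Fintype R] [Fintype Rˣ]
    {k : ℕ} (hk : k ≠ 0) : ∑ x : R, Ring.inverse x ^ k = ∑ u : Rˣ, (u : R) ^ k := by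
  rw [← Fintype.sum_equiv (Equiv.inv Rˣ) (fun u => ((u⁻¹ : Rˣ) : R) ^ k) _ fun _ => rfl]
  symm
  refine Fintype.sum_of_injective Units.val Units.val_injective _ _ ?_ fun u => ?_
  · rintro x hx
    rw [Ring.inverse_non_unit x hx, zero_pow hk]
  · rw [Ring.inverse_unit]

theorem sum_units_pow_eq_zero {R : Type*} [CommRing R] [Fintype Rˣ] (a : Rˣ) (k : ℕ)
    (ha : IsUnit ((a : R) ^ k - 1)) : ∑ u : Rˣ, (u : R) ^ k = 0 := by
  have hscale : ∑ u : Rˣ, (u : R) ^ k = (a : R) ^ k * ∑ u : Rˣ, (u : R) ^ k :=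
    calc ∑ u : Rˣ, (u : R) ^ k = ∑ u : Rˣ, ((a * u : Rˣ) : R) ^ k :=
          (Fintype.sum_equiv (Equiv.mulLeft a) _ _ fun _ => rfl).symm
      _ = (a : R) ^ k * ∑ u : Rˣ, (u : R) ^ k := by simp only [Units.val_mul, mul_pow, mul_sum]
  refine ha.mul_right_eq_zero.mp ?_
  rw [sub_mul, one_mul, ← hscale, sub_self]

namespace ZMod

variable {M : Type*} [AddCommMonoid M] {n : ℕ} [NeZero n]

theorem sum_range_natCast (f : ZMod n → M) : ∑ i ∈ range n, f i = ∑ x, f x :=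
  sum_nbij' (fun i => (i : ZMod n)) val (by simp) (fun x _ => by simpa using val_lt x)
    (fun i hi => val_cast_of_lt (mem_range.mp hi)) (fun x _ => natCast_zmod_val x)
    (fun _ _ => rfl)

theorem sum_range_mul_add_natCast (f : ZMod n → M) (a : ZMod n) (m : ℕ) :
    ∑ i ∈ range (m * n), f (a + i) = m • ∑ x, f x := by
  induction m with
  | zero => simp
  | succ m ih =>
    rw [Nat.succ_mul, sum_range_add, ih, succ_nsmul]
    simp only [Nat.cast_add, Nat.cast_mul, natCast_self, mul_zero, zero_add]
    rw [sum_range_natCast (fun x => f (a + x)),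
      Fintype.sum_equiv (Equiv.addLeft a) (fun x => f (a + x)) f fun _ => rfl]

theorem sum_Icc_one_mul_natCast (f : ZMod n → M) (m : ℕ) :
    ∑ i ∈ Icc 1 (m * n), f i = m • ∑ x, f x := by
  rw [← Ico_add_one_right_eq_Icc, sum_Ico_eq_sum_range, ← sum_range_mul_add_natCast f 1 m]
  simp [add_comm]

theorem isUnit_natCast_prime_pow_iff {p r : ℕ} (hp : p.Prime) (hr : r ≠ 0) (i : ℕ) :
    IsUnit (i : ZMod (p ^ r)) ↔ ¬p ∣ i := by
  rw [isUnit_iff_coprime, Nat.coprime_pow_right_iff (Nat.pos_of_ne_zero hr), Nat.coprime_comm,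
    hp.coprime_iff_not_dvd]

theorem sum_ringInverse_sq_eq_zero {p r : ℕ} [hp : Fact p.Prime] (hp3 : 3 < p) (hr : r ≠ 0) :
    ∑ x : ZMod (p ^ r), Ring.inverse x ^ 2 = 0 := by
  have not_dvd {c : ℕ} (hc0 : 0 < c) (hc : c ≤ 3) : ¬p ∣ c := fun h => by
    have := Nat.le_of_dvd hc0 h; omega
  have h2 : IsUnit (2 : ZMod (p ^ r)) := mod_cast
    (isUnit_natCast_prime_pow_iff hp.out hr 2).mpr (not_dvd two_pos (by norm_num))
  have h3 : IsUnit ((2 : ZMod (p ^ r)) ^ 2 - 1) := by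
    rw [show (2 : ZMod (p ^ r)) ^ 2 - 1 = ((3 : ℕ) : ZMod (p ^ r)) by norm_num]
    exact (isUnit_natCast_prime_pow_iff hp.out hr 3).mpr (not_dvd three_pos le_rfl)
  rw [sum_ringInverse_pow_eq_sum_units two_ne_zero]
  exact sum_units_pow_eq_zero h2.unit 2 h3

theorem sum_filter_not_dvd_ringInverse_sq_eq_zero {p r : ℕ} [hp : Fact p.Prime]
    (hp3 : 3 < p) (hr : r ≠ 0) (m : ℕ) :
    ∑ i ∈ (Icc 1 (m * p ^ r)).filter (fun i => ¬p ∣ i),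
      Ring.inverse (i : ZMod (p ^ r)) ^ 2 = 0 := by
  rw [sum_filter_of_ne fun i _ hi => ?_, sum_Icc_one_mul_natCast (fun x => Ring.inverse x ^ 2),
    sum_ringInverse_sq_eq_zero hp3 hr, smul_zero]
  rw [← isUnit_natCast_prime_pow_iff hp.out hr]
  contrapose! hi
  rw [Ring.inverse_non_unit _ hi, zero_pow two_ne_zero]

end ZMod

theorem PadicInt.norm_le_pow_of_toZModPow_eq_zero {p : ℕ} [Fact p.Prime] {n : ℕ} {z : ℤ_[p]}
    (hz : toZModPow n z = 0) : ‖z‖ ≤ (p : ℝ) ^ (-n : ℤ) :=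
  (norm_le_pow_iff_mem_span_pow z n).mpr (ker_toZModPow (p := p) n ▸ RingHom.mem_ker.mpr hz)

theorem S_two_padic_general (p : ℕ) (hp : p.Prime) (hp3 : 3 < p) (m r : ℕ)
    (hr : 1 ≤ r) :
    padicNorm p (∑ i ∈ (Finset.Icc 1 (m * p ^ r)).filter (fun i => ¬ p ∣ i),
        (1 : ℚ) / (i : ℚ) ^ 2) ≤ (p : ℚ) ^ (-(r : ℤ)) := by
  have : Fact p.Prime := ⟨hp⟩
  set s := (Icc 1 (m * p ^ r)).filter (fun i => ¬ p ∣ i)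
  have hunit (i : ℕ) (hi : i ∈ s) : IsUnit (i : ℤ_[p]) :=
    PadicInt.isUnit_iff.mpr (PadicInt.norm_natCast_eq_one_iff.mpr
      (hp.coprime_iff_not_dvd.mpr (mem_filter.mp hi).2))
  set z : ℤ_[p] := ∑ i ∈ s, Ring.inverse (i : ℤ_[p]) ^ 2
  have hz : (z : ℚ_[p]) = ((∑ i ∈ s, (1 : ℚ) / (i : ℚ) ^ 2 : ℚ) : ℚ_[p]) := by
    rw [PadicInt.coe_sum]
    push_cast
    refine sum_congr rfl fun i hi => ?_
    have hinv : ((Ring.inverse (i : ℤ_[p]) : ℤ_[p]) : ℚ_[p]) = Ring.inverse (i : ℚ_[p]) :=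
      (hunit i hi).map_ringInverse PadicInt.Coe.ringHom
    rw [hinv, Ring.inverse_eq_inv', inv_pow, one_div]
  have hz0 : PadicInt.toZModPow r z = 0 := by
    rw [map_sum, ← ZMod.sum_filter_not_dvd_ringInverse_sq_eq_zero hp3 (by omega) m]
    refine sum_congr rfl fun i hi => ?_
    rw [map_pow, (hunit i hi).map_ringInverse, map_natCast]
  rw [← Rat.cast_le (K := ℝ), ← Padic.eq_padicNorm, ← hz, ← PadicInt.norm_def]
  push_cast
  exact_mod_cast PadicInt.norm_le_pow_of_toZModPow_eq_zero hz0

theorem S_two_padic (p : ℕ) (hp : p.Prime) (hp3 : 3 < p) (m r : ℕ)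
    (hm : 1 ≤ m) (hr : 1 ≤ r) :
    padicNorm p (∑ i ∈ (Finset.Icc 1 (m * p ^ r)).filter (fun i => ¬ p ∣ i),
        (1 : ℚ) / (i : ℚ) ^ 2) ≤ (p : ℚ) ^ (-(r : ℤ)) :=
  S_two_padic_general p hp hp3 m r hr
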